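/- If t ∈ D[ω] = Z[1/√2, i] and t†t = uξ for some ξ ∈ Z[√2] (an integer of the ring Z[√2], not merely of D[√2]) and some unit u of Z[√2], then t ∈ Z[ω]. -/
import Mathlib
noncomputable def ω : ℂ := (1 + Complex.I) / (Real.sqrt 2 : ℂ)
noncomputable def zω (a b c d : ℤ) : ℂ := a * ω ^ 3 + b * ω ^ 2 + c * ω + d

lemma s2_sq : (Real.sqrt 2 : ℂ)^2 = 2 := by
  norm_cast
  rw [Real.sq_sqrt]
  norm_num

lemma s2_ne : (Real.sqrt 2 : ℂ) ≠ 0 := by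
  simp only [ne_eq, Complex.ofReal_eq_zero]
  positivity

lemma ω_eq : ω = ((Real.sqrt 2 / 2 : ℝ) : ℂ) + ((Real.sqrt 2 / 2 : ℝ) : ℂ) * Complex.I := by
  rw [ω, div_eq_iff s2_ne]
  push_cast
  linear_combination (-(1 + Complex.I)/2) * s2_sq

lemma zω_eq (a b c d : ℤ) :
    zω a b c d = ((d : ℝ) + (c - a) * (Real.sqrt 2 / 2) : ℝ) +
      (((b : ℝ) + (c + a) * (Real.sqrt 2 / 2) : ℝ) : ℂ) * Complex.I := by
  have hI2 : Complex.I ^ 2 = -1 := Complex.I_sq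
  have hI3 : Complex.I ^ 3 = -Complex.I := by rw [pow_succ, hI2]; ring
  have hr2 := s2_sq
  have hr3 : (Real.sqrt 2 : ℂ)^3 = 2 * (Real.sqrt 2 : ℂ) := by rw [pow_succ, hr2]
  rw [zω, ω_eq]
  push_cast
  ring_nf
  simp only [hI2, hI3, hr2, hr3]
  ring

lemma norm_zω (a b c d : ℤ) :
    (starRingEnd ℂ) (zω a b c d) * zω a b c d =
      (((a^2+b^2+c^2+d^2 : ℤ) : ℝ) + ((a*b+b*c+c*d-d*a : ℤ) : ℝ) * Real.sqrt 2 : ℂ) := by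
  have hI2 : Complex.I ^ 2 = -1 := Complex.I_sq
  have hr2 := s2_sq
  rw [zω_eq]
  simp only [map_add, map_mul, Complex.conj_ofReal, Complex.conj_I]
  push_cast
  ring_nf
  simp only [hI2, hr2]
  ring

lemma mul_s2_zω (a b c d : ℤ) :
    (Real.sqrt 2 : ℂ) * zω a b c d = zω (b-d) (a+c) (b+d) (c-a) := by
  have hr2 := s2_sq
  rw [zω_eq, zω_eq]
  push_cast
  ring_nf
  simp only [hr2]
  ring

lemma lin_indep {m n m' n' : ℤ} (h : (m:ℝ) + n * Real.sqrt 2 = m' + n' * Real.sqrt 2) :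
    m = m' ∧ n = n' := by
  by_cases hn : n = n'
  · subst hn
    constructor
    · have : (m : ℝ) = m' := by linarith
      exact_mod_cast this
    · rfl
  · exfalso
    have hnn : ((n - n' : ℤ) : ℝ) ≠ 0 := by
      simp only [ne_eq, Int.cast_eq_zero, sub_eq_zero]
      exact hn
    have key : ((n - n' : ℤ) : ℝ) * Real.sqrt 2 = ((m' - m : ℤ) : ℝ) := by
      push_cast
      linarith
    have hs : Real.sqrt 2 = ((m' - m : ℤ) : ℝ) / ((n - n' : ℤ) : ℝ) := by
      rw [eq_div_iff hnn]
      linarith [key]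
    have hs' : Real.sqrt 2 = (((m' - m : ℤ) / ((n - n' : ℤ) : ℚ) : ℚ) : ℝ) := by
      rw [hs]; push_cast; ring
    exact irrational_sqrt_two ⟨_, hs'.symm⟩

lemma parity {a b c d : ℤ} (h1 : (2:ℤ) ∣ a^2+b^2+c^2+d^2) (h2 : (2:ℤ) ∣ a*b+b*c+c*d-d*a) :
    (2:ℤ) ∣ a + c ∧ (2:ℤ) ∣ b + d := by
  have key : ∀ α β γ δ : ZMod 2, α^2+β^2+γ^2+δ^2 = 0 → α*β+β*γ+γ*δ-δ*α = 0 →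
      α + γ = 0 ∧ β + δ = 0 := by decide
  have h1' : ((a:ZMod 2)^2+(b:ZMod 2)^2+(c:ZMod 2)^2+(d:ZMod 2)^2) = 0 := by
    have := (ZMod.intCast_zmod_eq_zero_iff_dvd _ 2).mpr h1
    push_cast at this
    exact this
  have h2' : ((a:ZMod 2)*(b:ZMod 2)+(b:ZMod 2)*(c:ZMod 2)+(c:ZMod 2)*(d:ZMod 2)-(d:ZMod 2)*(a:ZMod 2)) = 0 := by
    have := (ZMod.intCast_zmod_eq_zero_iff_dvd _ 2).mpr h2
    push_cast at this
    exact this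
  obtain ⟨k1, k2⟩ := key _ _ _ _ h1' h2'
  constructor
  · exact (ZMod.intCast_zmod_eq_zero_iff_dvd _ 2).mp (by push_cast; exact k1)
  · exact (ZMod.intCast_zmod_eq_zero_iff_dvd _ 2).mp (by push_cast; exact k2)

/-- If t ∈ D[ω] and t†t is, up to a unit of ℤ[√2], an element of ℤ[√2], then t ∈ ℤ[ω]. -/
theorem mem_Zomega_of_self_mul_conj (t : ℂ)
    (ht : ∃ k : ℕ, ∃ a b c d : ℤ, (Real.sqrt 2 : ℂ) ^ k * t = zω a b c d)
    (h : ∃ x y p q p' q' : ℤ,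
      ((p : ℝ) + q * Real.sqrt 2) * ((p' : ℝ) + q' * Real.sqrt 2) = 1 ∧
      (starRingEnd ℂ) t * t =
        ((((p : ℝ) + q * Real.sqrt 2) * ((x : ℝ) + y * Real.sqrt 2) : ℝ) : ℂ)) :
    ∃ a b c d : ℤ, t = zω a b c d := by
  obtain ⟨x, y, p, q, p', q', _hu, hprod⟩ := h
  have hr2 : Real.sqrt 2 ^ 2 = 2 := Real.sq_sqrt (by norm_num)
  set X : ℤ := p*x+2*q*y with hX
  set Y : ℤ := p*y+q*x with hY
  have hre : ((p : ℝ) + q * Real.sqrt 2) * ((x : ℝ) + y * Real.sqrt 2)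
      = ((X : ℝ) + (Y : ℝ) * Real.sqrt 2) := by
    rw [hX, hY]; push_cast; linear_combination (q*y : ℝ) * hr2
  have htt : (starRingEnd ℂ) t * t = (((X:ℝ) : ℂ) + ((Y:ℝ) : ℂ) * (Real.sqrt 2 : ℂ)) := by
    rw [hprod, hre]; push_cast; ring
  obtain ⟨k, hk⟩ := ht
  induction k generalizing t with
  | zero =>
    obtain ⟨a, b, c, d, hk⟩ := hk
    exact ⟨a, b, c, d, by simpa using hk⟩
  | succ n ih =>
    obtain ⟨a, b, c, d, hk⟩ := hk
    have hnorm : (starRingEnd ℂ) (zω a b c d) * zω a b c d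
        = (((2^(n+1)*X : ℤ) : ℝ) : ℂ) + (((2^(n+1)*Y : ℤ) : ℝ) : ℂ) * (Real.sqrt 2 : ℂ) := by
      rw [← hk]
      have : (starRingEnd ℂ) ((Real.sqrt 2 : ℂ) ^ (n+1) * t) * ((Real.sqrt 2 : ℂ) ^ (n+1) * t)
          = ((Real.sqrt 2 : ℂ)^2)^(n+1) * ((starRingEnd ℂ) t * t) := by
        simp only [map_mul, map_pow, Complex.conj_ofReal]
        ring
      rw [this, s2_sq, htt]
      push_cast
      ring
    rw [norm_zω] at hnorm
    have hreal : ((a^2+b^2+c^2+d^2 : ℤ) : ℝ) + ((a*b+b*c+c*d-d*a : ℤ) : ℝ) * Real.sqrt 2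
        = ((2^(n+1)*X : ℤ) : ℝ) + ((2^(n+1)*Y : ℤ) : ℝ) * Real.sqrt 2 := by
      exact_mod_cast hnorm
    obtain ⟨e1, e2⟩ := lin_indep hreal
    have hd1 : (2:ℤ) ∣ a^2+b^2+c^2+d^2 := ⟨2^n*X, by rw [e1]; ring⟩
    have hd2 : (2:ℤ) ∣ a*b+b*c+c*d-d*a := ⟨2^n*Y, by rw [e2]; ring⟩
    obtain ⟨hac, hbd⟩ := parity hd1 hd2
    obtain ⟨m, hm⟩ := hac
    obtain ⟨w, hw⟩ := hbd
    have hfac : zω a b c d = (Real.sqrt 2 : ℂ) * zω (b - w) m w (c - m) := by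
      rw [mul_s2_zω]
      congr 1 <;> omega
    have hk' : (Real.sqrt 2 : ℂ) ^ n * t = zω (b - w) m w (c - m) := by
      apply mul_left_cancel₀ s2_ne
      rw [← hfac, ← hk, pow_succ]
      ring
    exact ih t hprod htt ⟨_, _, _, _, hk'⟩
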